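/- arXiv:1801.00749 — 5 statements merged into one kernel-verified Lean document; each statement's English description precedes it below -/
import Mathlib

section
/- Every cut matrix cc^T with c ∈ {±1}^n is an extreme point of the elliptope E_n. -/
/-!
The 2 × 2 principal minors of a positive semidefinite matrix with unit diagonal force every
entry into `[-1, 1]`, so the elliptope lies in the cube `[-1, 1]^(n × n)`. A cut matrix has all
entries `±1`, hence is a vertex of that cube; a point of a subset that is extreme in the larger
set is extreme in the subset.
-/

open Matrix

/-- The elliptope: n×n real symmetric psd matrices with unit diagonal. -/
def elliptope (n : ℕ) : Set (Matrix (Fin n) (Fin n) ℝ) :=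
  {X | X.PosSemidef ∧ ∀ i, X i i = 1}

theorem Matrix.PosSemidef.two_mul_abs_apply_le {ι R : Type*} [Fintype ι] [CommRing R]
    [LinearOrder R] [IsStrictOrderedRing R] [StarRing R] [TrivialStar R] {X : Matrix ι ι R}
    (hX : X.PosSemidef) (i j : ι) : 2 * |X i j| ≤ X i i + X j j := by
  have hquad (s : R) : 0 ≤ X i i + 2 * s * X i j + s ^ 2 * X j j := by
    have h := (hX.submatrix ![i, j]).dotProduct_mulVec_nonneg ![1, s]
    have hji : X j i = X i j := by simpa using hX.1.apply i j
    simp only [dotProduct, mulVec, submatrix_apply, Fin.sum_univ_two, Pi.star_apply,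
      star_trivial, cons_val_zero, cons_val_one, cons_val_fin_one, mul_one, one_mul, hji] at h
    linear_combination h
  have hplus := hquad 1
  have hminus := hquad (-1)
  norm_num at hplus hminus
  cases abs_cases (X i j) <;> linarith

theorem elliptope_subset_pi_Icc (n : ℕ) :
    elliptope n ⊆ Set.univ.pi fun _ => Set.univ.pi fun _ => Set.Icc (-1) 1 := by
  rintro X ⟨hX, hdiag⟩ i - j -
  have h := hX.two_mul_abs_apply_le i j
  rw [hdiag, hdiag] at h
  exact abs_le.1 (by linarith)

theorem mem_extremePoints_pi_pi_Icc {ι κ : Type*} {M : ι → κ → ℝ}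
    (hM : ∀ i j, M i j = -1 ∨ M i j = 1) :
    M ∈ Set.extremePoints ℝ
      (Set.univ.pi fun _ : ι => Set.univ.pi fun _ : κ => Set.Icc (-1) 1) := by
  simp only [extremePoints_pi, Set.extremePoints_Icc (by norm_num : (-1 : ℝ) ≤ 1)]
  exact fun i _ j _ => hM i j

theorem cutMatrix_extremePoint {n : ℕ} (c : Fin n → ℝ)
    (hc : ∀ i, c i = 1 ∨ c i = -1) :
    Matrix.vecMulVec c c ∈ Set.extremePoints ℝ (elliptope n) := by
  have hsign (i j : Fin n) : c i * c j = -1 ∨ c i * c j = 1 := by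
    rcases hc i with hi | hi <;> rcases hc j with hj | hj <;> simp [hi, hj]
  have hmem : vecMulVec c c ∈ elliptope n := by
    refine ⟨posSemidef_vecMulVec_self_star c, fun i => ?_⟩
    rcases hc i with hi | hi <;> simp [vecMulVec_apply, hi]
  exact inter_extremePoints_subset_extremePoints_of_subset (elliptope_subset_pi_Icc n)
    ⟨hmem, mem_extremePoints_pi_pi_Icc hsign⟩
end

section
/- Let w ∼ SBern(p, r) with p ∈ (0,1), set α = (2p-1)^2, and define y ∈ ℝ^{r(r-1)/2} by y_{ij} = 1 - w_i w_j for 1 ≤ i < j ≤ r. Then the smallest eigenvalue of the second-moment matrix Σ = E[yy^T] is at least (1-α)^2. -/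
open MeasureTheory Matrix

/-- The signed Bernoulli distribution on ℝ: +1 with probability p, -1 with probability 1-p. -/
noncomputable def signBern (p : ℝ) : Measure ℝ :=
  ENNReal.ofReal p • Measure.dirac 1 + ENNReal.ofReal (1 - p) • Measure.dirac (-1)

/-- The distribution SBern(p, r). -/
noncomputable def signBernVec (p : ℝ) (r : ℕ) : Measure (Fin r → ℝ) :=
  Measure.pi fun _ => signBern p

/-- Index set of pairs (i,j) with i < j. -/
abbrev PairIndex (r : ℕ) := {q : Fin r × Fin r // q.1 < q.2}

/-- The vector y derived from w: y_{ij} = 1 - w_i * w_j for i < j. -/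
def yVec {r : ℕ} (w : Fin r → ℝ) : PairIndex r → ℝ :=
  fun q => 1 - w q.1.1 * w q.1.2

/-! Expanding `y_a y_b` with `w_m² = 1` gives `E[y_a y_b] = 1 - 2α + μ ^ |a ∆ b|` for `μ = 2p - 1`,
which depends only on the overlap `t = |a ∩ b| ∈ {0, 1, 2}` of the two pairs. Matching the three
values, `Σ = (1 - α)² (J + I) + α (1 - α) G`, where `J` is the all-ones matrix and `G_ab = |a ∩ b|`
is the Gram matrix of the incidence vectors of the pairs. Both `J` and `G` are positive
semidefinite and `0 ≤ α ≤ 1`, so `Σ - (1 - α)² I ⪰ 0` and every eigenvalue is at least `(1 - α)²`.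
-/

open Finset
open scoped symmDiff ComplexOrder

theorem Matrix.IsHermitian.le_eigenvalues_of_posSemidef_sub {𝕜 n : Type*} [RCLike 𝕜] [Fintype n]
    [DecidableEq n] {A : Matrix n n 𝕜} (hA : A.IsHermitian) {c : ℝ}
    (h : (A - (c : 𝕜) • 1).PosSemidef) (k : n) : c ≤ hA.eigenvalues k := by
  set v := hA.eigenvectorBasis k
  have hv : star ⇑v ⬝ᵥ ⇑v = 1 := by
    rw [dotProduct_comm, ← EuclideanSpace.inner_eq_star_dotProduct, inner_self_eq_norm_sq_to_K,
      hA.eigenvectorBasis.orthonormal.1 k]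
    simp
  have hquad := h.dotProduct_mulVec_nonneg v
  rwa [sub_mulVec, mulVec_eigenvectorBasis, smul_mulVec, one_mulVec, dotProduct_sub,
    dotProduct_smul, dotProduct_smul, hv, RCLike.real_smul_eq_coe_smul (K := 𝕜), smul_eq_mul,
    smul_eq_mul, mul_one, mul_one, sub_nonneg, RCLike.ofReal_le_ofReal] at hquad

theorem Finset.prod_mul_prod_eq_prod_symmDiff {ι M : Type*} [DecidableEq ι] [CommMonoid M]
    {f : ι → M} {s t : Finset ι} (hf : ∀ i ∈ s ∩ t, f i * f i = 1) :
    (∏ i ∈ s, f i) * ∏ i ∈ t, f i = ∏ i ∈ s ∆ t, f i := by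
  have hsq : (∏ i ∈ s ∩ t, f i) * ∏ i ∈ s ∩ t, f i = 1 := by
    rw [← prod_mul_distrib, prod_eq_one hf]
  have hunion : s ∪ t = s ∆ t ∪ s ∩ t := (symmDiff_sup_inf s t).symm
  have hdisj : Disjoint (s ∆ t) (s ∩ t) := disjoint_symmDiff_inf s t
  rw [← prod_union_inter, hunion, prod_union hdisj, mul_assoc, hsq, mul_one]

section signBern

variable {p : ℝ}

theorem isProbabilityMeasure_signBern (hp : p ∈ Set.Icc (0 : ℝ) 1) :
    IsProbabilityMeasure (signBern p) := by
  constructor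
  simp [signBern, ← ENNReal.ofReal_add hp.1 (sub_nonneg.2 hp.2)]

theorem ae_signBern : ∀ᵐ x ∂signBern p, x = 1 ∨ x = -1 := by
  simp only [signBern, ae_add_measure_iff]
  constructor <;> refine Measure.ae_smul_measure ?_ _ <;> simp [ae_dirac_eq]

theorem integral_id_signBern (hp : p ∈ Set.Icc (0 : ℝ) 1) : ∫ x, x ∂signBern p = 2 * p - 1 := by
  rw [signBern, integral_add_measure, integral_smul_measure, integral_smul_measure,
    integral_dirac, integral_dirac, ENNReal.toReal_ofReal hp.1,
    ENNReal.toReal_ofReal (sub_nonneg.2 hp.2)]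
  · simp only [smul_eq_mul, mul_one, mul_neg, neg_sub]
    ring
  all_goals exact (integrable_dirac (by simp)).smul_measure ENNReal.ofReal_ne_top

variable (hp : p ∈ Set.Icc (0 : ℝ) 1) {r : ℕ}
include hp

theorem isProbabilityMeasure_signBernVec : IsProbabilityMeasure (signBernVec p r) := by
  have := isProbabilityMeasure_signBern hp
  unfold signBernVec; infer_instance

theorem ae_signBernVec : ∀ᵐ w ∂signBernVec p r, ∀ m, w m = 1 ∨ w m = -1 := by
  have := isProbabilityMeasure_signBern hp
  exact ae_all_iff.2 fun _ =>
    (Measure.tendsto_eval_ae_ae (μ := fun _ : Fin r => signBern p)).eventually ae_signBern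

theorem integral_prod_signBernVec (s : Finset (Fin r)) :
    ∫ w, ∏ m ∈ s, w m ∂signBernVec p r = (2 * p - 1) ^ #s := by
  have := isProbabilityMeasure_signBern hp
  have h := integral_fintype_prod_eq_prod (fun m (x : ℝ) => if m ∈ s then x else 1)
    (μ := fun _ => signBern p)
  simp only [prod_ite_mem, univ_inter] at h
  rw [signBernVec, h]
  calc _ = ∏ i, if i ∈ s then 2 * p - 1 else 1 :=
        prod_congr rfl fun i _ => by split_ifs <;> simp [integral_id_signBern hp]
    _ = _ := by simp [prod_ite_mem]

theorem integrable_prod_signBernVec (s : Finset (Fin r)) :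
    Integrable (fun w => ∏ m ∈ s, w m) (signBernVec p r) := by
  have := isProbabilityMeasure_signBernVec hp (r := r)
  refine .of_bound (by fun_prop) 1 ?_
  filter_upwards [ae_signBernVec hp] with w hw
  rw [Real.norm_eq_abs, abs_prod]
  exact (prod_eq_one fun m _ => by rcases hw m with h | h <;> simp [h]).le

end signBern

theorem Finset.card_symmDiff_add_two_mul_card_inter {α : Type*} [DecidableEq α]
    (s t : Finset α) : #(s ∆ t) + 2 * #(s ∩ t) = #s + #t := by
  have hdisj : Disjoint (s ∆ t) (s ∩ t) := disjoint_symmDiff_inf s t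
  have hunion : s ∪ t = s ∆ t ∪ s ∩ t := (symmDiff_sup_inf s t).symm
  rw [← card_union_add_card_inter, hunion, card_union_of_disjoint hdisj]
  ring

namespace PairIndex

variable {r : ℕ}

def toFinset (a : PairIndex r) : Finset (Fin r) := {a.1.1, a.1.2}

theorem card_toFinset (a : PairIndex r) : #a.toFinset = 2 :=
  card_pair a.2.ne

theorem toFinset_injective : Function.Injective (toFinset (r := r)) := by
  rintro ⟨⟨i, j⟩, hij⟩ ⟨⟨k, l⟩, hkl⟩ h
  simp only [toFinset] at h
  have hk : k ∈ ({i, j} : Finset (Fin r)) := by rw [h]; simp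
  have hl : l ∈ ({i, j} : Finset (Fin r)) := by rw [h]; simp
  simp only [mem_insert, mem_singleton] at hk hl
  rcases hk with rfl | rfl <;> rcases hl with rfl | rfl
  all_goals first | rfl | (exfalso; order)

theorem card_inter_toFinset_eq_two_iff {a b : PairIndex r} :
    #(a.toFinset ∩ b.toFinset) = 2 ↔ a = b := by
  refine ⟨fun h => toFinset_injective ?_, fun h => by rw [h, inter_self, card_toFinset]⟩
  have hA := eq_of_subset_of_card_le inter_subset_left (h ▸ (card_toFinset a).le)
  have hB := eq_of_subset_of_card_le inter_subset_right (h ▸ (card_toFinset b).le)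
  rw [← hA, hB]

end PairIndex

theorem yVec_eq_one_sub_prod {r : ℕ} (w : Fin r → ℝ) (a : PairIndex r) :
    yVec w a = 1 - ∏ m ∈ a.toFinset, w m := by
  rw [PairIndex.toFinset, prod_pair a.2.ne, yVec]

theorem integral_yVec_mul_yVec {p : ℝ} (hp : p ∈ Set.Icc (0 : ℝ) 1) {r : ℕ} (a b : PairIndex r) :
    ∫ w, yVec w a * yVec w b ∂signBernVec p r
      = 1 - 2 * (2 * p - 1) ^ 2 + (2 * p - 1) ^ #(a.toFinset ∆ b.toFinset) := by
  have := isProbabilityMeasure_signBernVec hp (r := r)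
  have hae : (fun w => yVec w a * yVec w b) =ᵐ[signBernVec p r] fun w =>
      1 - ∏ m ∈ a.toFinset, w m - ∏ m ∈ b.toFinset, w m + ∏ m ∈ a.toFinset ∆ b.toFinset, w m := by
    filter_upwards [ae_signBernVec hp] with w hw
    have hsq : ∀ m ∈ a.toFinset ∩ b.toFinset, w m * w m = 1 := fun m _ => by
      rcases hw m with h | h <;> simp [h]
    rw [yVec_eq_one_sub_prod, yVec_eq_one_sub_prod, ← prod_mul_prod_eq_prod_symmDiff hsq]
    ring
  have hint := integrable_prod_signBernVec hp (r := r)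
  have hint₁ : Integrable (fun w : Fin r → ℝ => 1 - ∏ m ∈ a.toFinset, w m) (signBernVec p r) :=
    (integrable_const 1).sub (hint _)
  have hint₂ : Integrable (fun w : Fin r → ℝ => 1 - ∏ m ∈ a.toFinset, w m - ∏ m ∈ b.toFinset, w m)
      (signBernVec p r) := hint₁.sub (hint _)
  rw [integral_congr_ae hae, integral_add hint₂ (hint _), integral_sub hint₁ (hint _),
    integral_sub (integrable_const 1) (hint _)]
  simp only [integral_prod_signBernVec hp, PairIndex.card_toFinset, integral_const, probReal_univ]
  ring

theorem secondMoment_entry_eq {r : ℕ} (μ : ℝ) (a b : PairIndex r) :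
    1 - 2 * μ ^ 2 + μ ^ #(a.toFinset ∆ b.toFinset)
      = (1 - μ ^ 2) ^ 2 + (if a = b then (1 - μ ^ 2) ^ 2 else 0)
        + μ ^ 2 * (1 - μ ^ 2) * #(a.toFinset ∩ b.toFinset) := by
  by_cases hab : a = b
  · subst hab
    simp only [symmDiff_self, bot_eq_empty, card_empty, pow_zero, if_true, inter_self,
      PairIndex.card_toFinset, Nat.cast_ofNat]
    ring
  have hcard := card_symmDiff_add_two_mul_card_inter a.toFinset b.toFinset
  have hle : #(a.toFinset ∩ b.toFinset) ≤ 2 :=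
    (card_le_card inter_subset_left).trans (PairIndex.card_toFinset a).le
  have hne : #(a.toFinset ∩ b.toFinset) ≠ 2 := mt PairIndex.card_inter_toFinset_eq_two_iff.1 hab
  simp only [PairIndex.card_toFinset, if_neg hab] at hcard ⊢
  interval_cases h : #(a.toFinset ∩ b.toFinset)
  · rw [show #(a.toFinset ∆ b.toFinset) = 4 by omega]; push_cast; ring
  · rw [show #(a.toFinset ∆ b.toFinset) = 2 by omega]; push_cast; ring
  · exact absurd rfl hne

theorem posSemidef_card_inter {α ι : Type*} [Fintype α] [DecidableEq α] [Finite ι]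
    (S : ι → Finset α) :
    (of fun i j => (#(S i ∩ S j) : ℝ)).PosSemidef := by
  set N : Matrix α ι ℝ := of fun x i => if x ∈ S i then 1 else 0
  have hgram : (of fun i j => (#(S i ∩ S j) : ℝ)) = Nᴴ * N := by
    ext i j
    simp only [N, of_apply, mul_apply, conjTranspose_apply, star_trivial, ← ite_and, mul_boole,
      sum_boole]
    congr 2
    ext x
    simp [and_comm]
  rw [hgram]
  exact posSemidef_conjTranspose_mul_self N

theorem secondMoment_sub_smul_one {p : ℝ} (hp : p ∈ Set.Icc (0 : ℝ) 1) {r : ℕ} :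
    (of fun a b => ∫ w, yVec w a * yVec w b ∂signBernVec p r) - (1 - (2 * p - 1) ^ 2) ^ 2 • 1
      = (1 - (2 * p - 1) ^ 2) ^ 2 • vecMulVec 1 1
        + ((2 * p - 1) ^ 2 * (1 - (2 * p - 1) ^ 2)) •
          of fun a b : PairIndex r => (#(a.toFinset ∩ b.toFinset) : ℝ) := by
  ext a b
  simp only [Matrix.sub_apply, Matrix.add_apply, Matrix.smul_apply, of_apply, one_apply,
    vecMulVec_apply, Pi.one_apply, smul_eq_mul, integral_yVec_mul_yVec hp, secondMoment_entry_eq]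
  split_ifs <;> ring

theorem min_eigenvalue_secondMoment_yVec {r : ℕ} (p : ℝ) (hp : p ∈ Set.Ioo (0:ℝ) 1)
    (α : ℝ) (hα : α = (2 * p - 1) ^ 2)
    (Sig : Matrix (PairIndex r) (PairIndex r) ℝ)
    (hSig : Sig = Matrix.of fun a b => ∫ w, yVec w a * yVec w b ∂(signBernVec p r))
    (hHerm : Sig.IsHermitian) :
    ∀ k, (1 - α) ^ 2 ≤ hHerm.eigenvalues k := by
  intro k
  subst hSig hα
  have hα_le_one : (2 * p - 1) ^ 2 ≤ 1 := by nlinarith [hp.1, hp.2]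
  apply hHerm.le_eigenvalues_of_posSemidef_sub
  rw [RCLike.ofReal_real_eq_id, id, secondMoment_sub_smul_one (Set.Ioo_subset_Icc_self hp)]
  have hones : (vecMulVec 1 1 : Matrix (PairIndex r) (PairIndex r) ℝ).PosSemidef := by
    simpa using posSemidef_vecMulVec_self_star (1 : PairIndex r → ℝ)
  exact (hones.smul (sq_nonneg _)).add
    ((posSemidef_card_inter _).smul (mul_nonneg (sq_nonneg _) (sub_nonneg.2 hα_le_one)))
end

section
/- Let x ∈ ℝ^d be a random vector with E[xx^T] = Σ, λ = λ_min(Σ) > 0, and ‖x‖² ≤ B almost surely. If x_1, ..., x_s are i.i.d. copies of x, then the probability that span{x_1,...,x_s} ≠ ℝ^d is at most d·exp(-λs/(2B)). -/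
open MeasureTheory ProbabilityTheory Matrix

/-!
Put `A(x) = 1 - x xᵀ / B` and `Q = A(x₁) ⋯ A(x_s)`. If the samples do not span `ℝᵈ`, a nonzero
vector orthogonal to all of them is fixed by `Q`, hence `‖Q‖_F² ≥ 1`. On the other hand
`‖x‖² ≤ B` gives `‖A(x) q‖² ≤ ‖q‖² - (x ⬝ q)² / B` for every column `q`, whose expectation is at
most `(1 - λ/B) ‖q‖²` because `E (x ⬝ q)² = qᵀ Σ q ≥ λ ‖q‖²`. Peeling off one independent sample
at a time, `E ‖Q‖_F² ≤ d (1 - λ/B)ˢ ≤ d exp(-λ s / B)`, and Markov's inequality concludes.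
-/

section LinearAlgebra

variable {n : Type*} [Fintype n]

lemma dotProduct_self_nonneg {R : Type*} [Ring R] [LinearOrder R] [IsStrictOrderedRing R]
    (v : n → R) : 0 ≤ v ⬝ᵥ v :=
  Finset.sum_nonneg fun i _ => mul_self_nonneg (v i)

lemma dotProduct_sq_le (x q : n → ℝ) : (x ⬝ᵥ q) ^ 2 ≤ (x ⬝ᵥ x) * (q ⬝ᵥ q) := by
  simpa [dotProduct, sq] using Finset.sum_mul_sq_le_sq_mul_sq Finset.univ x q

lemma abs_mul_le_dotProduct_self (x : n → ℝ) (i j : n) : |x i * x j| ≤ x ⬝ᵥ x := by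
  have hsq : ∀ k, |x k| ^ 2 ≤ x ⬝ᵥ x := fun k => by
    simpa [dotProduct, sq] using
      Finset.single_le_sum (fun l _ => mul_self_nonneg (x l)) (Finset.mem_univ k)
  rw [abs_mul]
  nlinarith [hsq i, hsq j, sq_nonneg (|x i| - |x j|)]

lemma trace_transpose_mul_self {m R : Type*} [Fintype m] [NonUnitalNonAssocSemiring R]
    (Q : Matrix m n R) : (Qᵀ * Q).trace = ∑ j, Qᵀ j ⬝ᵥ Qᵀ j := rfl

lemma trace_transpose_mul_self_nonneg (Q : Matrix n n ℝ) : 0 ≤ (Qᵀ * Q).trace :=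
  Finset.sum_nonneg fun j _ => dotProduct_self_nonneg (Qᵀ j)

omit [Fintype n] in
lemma transpose_mul_apply {m R : Type*} [Fintype m] [CommSemiring R]
    (A : Matrix m m R) (Q : Matrix m n R) (j : n) : (A * Q)ᵀ j = A *ᵥ Qᵀ j := by
  rw [transpose_mul, ← vecMul_transpose]
  rfl

lemma one_le_trace_transpose_mul_self {Q : Matrix n n ℝ} {u : n → ℝ} (hu : u ≠ 0)
    (hQ : Q *ᵥ u = u) : 1 ≤ (Qᵀ * Q).trace := by
  have hpos : 0 < u ⬝ᵥ u :=
    (dotProduct_self_nonneg u).lt_of_ne (Ne.symm (dotProduct_self_eq_zero.not.mpr hu))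
  have hCS : u ⬝ᵥ u ≤ (Qᵀ * Q).trace * (u ⬝ᵥ u) :=
    calc u ⬝ᵥ u = ∑ i, (Q i ⬝ᵥ u) ^ 2 := by
          conv_lhs => rw [← hQ]
          simp [dotProduct, mulVec, sq]
      _ ≤ ∑ i, (Q i ⬝ᵥ Q i) * (u ⬝ᵥ u) := by
          gcongr with i
          exact dotProduct_sq_le _ _
      _ = (Qᵀ * Q).trace * (u ⬝ᵥ u) := by
          rw [← Finset.sum_mul]
          simp only [trace, diag, mul_apply, transpose_apply, dotProduct]
          rw [Finset.sum_comm]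
  exact le_of_mul_le_mul_right (by rwa [one_mul]) hpos

lemma exists_ne_zero_forall_dotProduct_eq_zero {K : Type*} [Field K] {S : Set (n → K)}
    (h : Submodule.span K S ≠ ⊤) : ∃ u ≠ 0, ∀ x ∈ S, x ⬝ᵥ u = 0 := by
  classical
  obtain ⟨f, hf, hker⟩ := Submodule.exists_dual_map_eq_bot_of_lt_top h.lt_top inferInstance
  set u : n → K := fun i => f fun j => if i = j then 1 else 0
  have hfu : ∀ x, f x = x ⬝ᵥ u := fun x => by simp [f.pi_apply_eq_sum_univ x, dotProduct, u]
  refine ⟨u, fun hu => hf (LinearMap.ext fun x => by simp [hfu x, hu]), fun x hx => ?_⟩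
  rw [← hfu, ← Submodule.mem_bot K, ← hker]
  exact Submodule.mem_map_of_mem (Submodule.subset_span hx)

variable [DecidableEq n]

lemma list_prod_mulVec_eq_self {R : Type*} [Semiring R] {l : List (Matrix n n R)} {u : n → R}
    (h : ∀ M ∈ l, M *ᵥ u = u) : l.prod *ᵥ u = u := by
  induction l with
  | nil => simp
  | cons M l ih =>
    rw [List.prod_cons, ← mulVec_mulVec, ih fun N hN => h N (List.mem_cons_of_mem M hN),
      h M List.mem_cons_self]

open scoped MatrixOrder in
lemma le_dotProduct_mulVec_of_le_eigenvalues {A : Matrix n n ℝ} (hA : A.IsHermitian) {r : ℝ}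
    (h : ∀ i, r ≤ hA.eigenvalues i) (q : n → ℝ) : r * (q ⬝ᵥ q) ≤ q ⬝ᵥ A *ᵥ q := by
  have hle : algebraMap ℝ (Matrix n n ℝ) r ≤ A := by
    rw [algebraMap_le_iff_le_spectrum (ha := hA.isSelfAdjoint),
      hA.spectrum_real_eq_range_eigenvalues]
    rintro _ ⟨i, rfl⟩
    exact h i
  rw [Matrix.le_iff, Algebra.algebraMap_eq_smul_one] at hle
  simpa [sub_mulVec, smul_mulVec] using hle.dotProduct_mulVec_nonneg q

end LinearAlgebra

section Deflation

variable {n : Type*} [Fintype n] [DecidableEq n]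

noncomputable def deflation (B : ℝ) (x : n → ℝ) : Matrix n n ℝ := 1 - B⁻¹ • vecMulVec x x

noncomputable def deflationProd {s : ℕ} (B : ℝ) (v : Fin s → n → ℝ) : Matrix n n ℝ :=
  (List.ofFn fun k => deflation B (v k)).prod

lemma deflation_mulVec (B : ℝ) (x q : n → ℝ) :
    deflation B x *ᵥ q = q - (B⁻¹ * (x ⬝ᵥ q)) • x := by
  simp [deflation, sub_mulVec, smul_mulVec, vecMulVec_mulVec, smul_smul]

lemma deflation_mulVec_of_dotProduct_eq_zero (B : ℝ) {x q : n → ℝ} (h : x ⬝ᵥ q = 0) :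
    deflation B x *ᵥ q = q := by
  simp [deflation_mulVec, h]

lemma deflation_mulVec_dotProduct_self_le {B : ℝ} (hB : 0 ≤ B) {x : n → ℝ} (hx : x ⬝ᵥ x ≤ B)
    (q : n → ℝ) :
    (deflation B x *ᵥ q) ⬝ᵥ (deflation B x *ᵥ q) ≤ q ⬝ᵥ q - B⁻¹ * (x ⬝ᵥ q) ^ 2 := by
  have hxB : B⁻¹ * (x ⬝ᵥ x) ≤ 1 := inv_mul_le_one_of_le₀ hx hB
  rw [deflation_mulVec]
  simp only [sub_dotProduct, dotProduct_sub, smul_dotProduct, dotProduct_smul, smul_eq_mul,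
    dotProduct_comm q x]
  nlinarith [mul_le_mul_of_nonneg_left hxB (mul_nonneg (inv_nonneg.mpr hB) (sq_nonneg (x ⬝ᵥ q)))]

lemma deflationProd_cons {s : ℕ} (B : ℝ) (x : n → ℝ) (v : Fin s → n → ℝ) :
    deflationProd B (Fin.cons x v) = deflation B x * deflationProd B v := by
  simp [deflationProd, List.ofFn_succ]

lemma deflationProd_mulVec_of_forall_dotProduct_eq_zero {s : ℕ} (B : ℝ) {v : Fin s → n → ℝ}
    {u : n → ℝ} (h : ∀ k, v k ⬝ᵥ u = 0) : deflationProd B v *ᵥ u = u :=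
  list_prod_mulVec_eq_self <| by
    simpa [List.mem_ofFn] using fun k => deflation_mulVec_of_dotProduct_eq_zero B (h k)

lemma continuous_deflationProd {s : ℕ} (B : ℝ) :
    Continuous (deflationProd B : (Fin s → n → ℝ) → Matrix n n ℝ) := by
  have : deflationProd B = fun v : Fin s → n → ℝ =>
      ((List.finRange s).map fun k => deflation B (v k)).prod := by
    funext v
    simp [deflationProd, List.ofFn_eq_map]
  rw [this]
  refine continuous_list_prod _ fun k _ => ?_
  unfold deflation
  fun_prop

lemma measurable_trace_deflationProd {s : ℕ} (B : ℝ) :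
    Measurable fun v : Fin s → n → ℝ => ((deflationProd B v)ᵀ * deflationProd B v).trace :=
  ((continuous_deflationProd B).matrix_transpose.matrix_mul
    (continuous_deflationProd B)).matrix_trace.measurable

end Deflation

lemma lintegral_pi_fin_succ {α : Type*} [MeasurableSpace α] (ν : Measure α) [SigmaFinite ν]
    {s : ℕ} {f : (Fin (s + 1) → α) → ENNReal} (hf : Measurable f) :
    ∫⁻ v, f v ∂(Measure.pi fun _ => ν) =
      ∫⁻ w, ∫⁻ x, f (Fin.cons x w) ∂ν ∂(Measure.pi fun _ : Fin s => ν) := by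
  set e := (MeasurableEquiv.piFinSuccAbove (fun _ : Fin (s + 1) => α) 0).symm
  rw [← (measurePreserving_piFinSuccAbove (fun _ => ν) 0).symm.lintegral_comp_emb
    e.measurableEmbedding, lintegral_prod_symm' (fun p => f (e p)) (hf.comp e.measurable)]
  simp [e, MeasurableEquiv.piFinSuccAbove_symm_apply, Fin.insertNthEquiv, Fin.insertNth_zero']

section SecondMoment

variable {n : Type*} [Fintype n] {ν : Measure (n → ℝ)} {B : ℝ}

lemma nonneg_of_ae_dotProduct_self_le [NeZero ν] (hB : ∀ᵐ x ∂ν, x ⬝ᵥ x ≤ B) : 0 ≤ B :=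
  let ⟨x, hx⟩ := hB.exists
  (dotProduct_self_nonneg x).trans hx

lemma integrable_apply_mul_apply [IsFiniteMeasure ν] (hB : ∀ᵐ x ∂ν, x ⬝ᵥ x ≤ B) (i j : n) :
    Integrable (fun x => x i * x j) ν := by
  refine Integrable.of_bound (by fun_prop) B ?_
  filter_upwards [hB] with x hx
  exact (abs_mul_le_dotProduct_self x i j).trans hx

lemma integrable_dotProduct_sq [IsFiniteMeasure ν] (hB : ∀ᵐ x ∂ν, x ⬝ᵥ x ≤ B) (q : n → ℝ) :
    Integrable (fun x => (x ⬝ᵥ q) ^ 2) ν := by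
  refine Integrable.of_bound (by fun_prop) (B * (q ⬝ᵥ q)) ?_
  filter_upwards [hB] with x hx
  rw [Real.norm_of_nonneg (sq_nonneg _)]
  exact (dotProduct_sq_le x q).trans (mul_le_mul_of_nonneg_right hx (dotProduct_self_nonneg q))

lemma integral_dotProduct_sq (hint : ∀ i j, Integrable (fun x => x i * x j) ν) (q : n → ℝ) :
    ∫ x, (x ⬝ᵥ q) ^ 2 ∂ν = q ⬝ᵥ (Matrix.of fun i j => ∫ x, x i * x j ∂ν) *ᵥ q := by
  have hexp : ∀ x : n → ℝ, (x ⬝ᵥ q) ^ 2 = ∑ i, ∑ j, q i * q j * (x i * x j) := fun x => by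
    simp only [dotProduct, sq, Finset.sum_mul_sum]
    exact Finset.sum_congr rfl fun i _ => Finset.sum_congr rfl fun j _ => by ring
  simp only [hexp]
  rw [integral_finsetSum _ fun i _ => integrable_finsetSum _ fun j _ => (hint i j).const_mul _]
  refine Finset.sum_congr rfl fun i _ => ?_
  rw [integral_finsetSum _ fun j _ => (hint i j).const_mul _, mulVec, dotProduct, Finset.mul_sum]
  refine Finset.sum_congr rfl fun j _ => ?_
  rw [integral_const_mul, of_apply]
  ring

end SecondMoment

section Span

variable {n : Type*} [Fintype n] [DecidableEq n] {ν : Measure (n → ℝ)} [IsProbabilityMeasure ν]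
  {B lam : ℝ}

lemma lintegral_trace_deflation_mul_le (hB : ∀ᵐ x ∂ν, x ⬝ᵥ x ≤ B)
    (hlam : ∀ q, lam * (q ⬝ᵥ q) ≤ ∫ x, (x ⬝ᵥ q) ^ 2 ∂ν) (Q : Matrix n n ℝ) :
    ∫⁻ x, ENNReal.ofReal ((deflation B x * Q)ᵀ * (deflation B x * Q)).trace ∂ν ≤
      ENNReal.ofReal (1 - lam / B) * ENNReal.ofReal (Qᵀ * Q).trace := by
  have hB0 := nonneg_of_ae_dotProduct_self_le hB
  set g : (n → ℝ) → ℝ := fun x => (Qᵀ * Q).trace - B⁻¹ * ∑ j, (x ⬝ᵥ Qᵀ j) ^ 2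
  have hle : ∀ᵐ x ∂ν, ((deflation B x * Q)ᵀ * (deflation B x * Q)).trace ≤ g x := by
    filter_upwards [hB] with x hx
    simp only [g, trace_transpose_mul_self, transpose_mul_apply, Finset.mul_sum,
      ← Finset.sum_sub_distrib]
    exact Finset.sum_le_sum fun j _ => deflation_mulVec_dotProduct_self_le hB0 hx _
  have hint : Integrable (fun x => B⁻¹ * ∑ j, (x ⬝ᵥ Qᵀ j) ^ 2) ν :=
    (integrable_finsetSum _ fun j _ => integrable_dotProduct_sq hB (Qᵀ j)).const_mul _
  have hg_nonneg : 0 ≤ᵐ[ν] g := by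
    filter_upwards [hle] with x hx
    exact (trace_transpose_mul_self_nonneg _).trans hx
  have hg : ∫ x, g x ∂ν ≤ (1 - lam / B) * (Qᵀ * Q).trace := by
    have hsum : lam * (Qᵀ * Q).trace ≤ ∑ j, ∫ x, (x ⬝ᵥ Qᵀ j) ^ 2 ∂ν := by
      rw [trace_transpose_mul_self, Finset.mul_sum]
      exact Finset.sum_le_sum fun j _ => hlam _
    rw [integral_sub (integrable_const _) hint, integral_const_mul,
      integral_finsetSum _ fun j _ => integrable_dotProduct_sq hB (Qᵀ j), integral_const,
      probReal_univ, one_smul, sub_mul, one_mul, div_eq_inv_mul, mul_assoc]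
    exact sub_le_sub_left (mul_le_mul_of_nonneg_left hsum (inv_nonneg.mpr hB0)) _
  calc ∫⁻ x, ENNReal.ofReal ((deflation B x * Q)ᵀ * (deflation B x * Q)).trace ∂ν
      ≤ ∫⁻ x, ENNReal.ofReal (g x) ∂ν := lintegral_mono_ae <| by
        filter_upwards [hle] with x hx using ENNReal.ofReal_le_ofReal hx
    _ = ENNReal.ofReal (∫ x, g x ∂ν) :=
        (ofReal_integral_eq_lintegral_ofReal ((integrable_const _).sub hint) hg_nonneg).symm
    _ ≤ ENNReal.ofReal ((1 - lam / B) * (Qᵀ * Q).trace) := ENNReal.ofReal_le_ofReal hg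
    _ = ENNReal.ofReal (1 - lam / B) * ENNReal.ofReal (Qᵀ * Q).trace :=
        ENNReal.ofReal_mul' (trace_transpose_mul_self_nonneg Q)

lemma lintegral_trace_deflationProd_le (hB : ∀ᵐ x ∂ν, x ⬝ᵥ x ≤ B)
    (hlam : ∀ q, lam * (q ⬝ᵥ q) ≤ ∫ x, (x ⬝ᵥ q) ^ 2 ∂ν) (s : ℕ) :
    ∫⁻ v, ENNReal.ofReal ((deflationProd B v)ᵀ * deflationProd B v).trace
        ∂(Measure.pi fun _ : Fin s => ν) ≤
      Fintype.card n * ENNReal.ofReal (1 - lam / B) ^ s := by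
  induction s with
  | zero => simp [deflationProd, trace_one]
  | succ s ih =>
    rw [lintegral_pi_fin_succ ν (measurable_trace_deflationProd B).ennreal_ofReal]
    calc _ ≤ ∫⁻ w, ENNReal.ofReal (1 - lam / B) *
          ENNReal.ofReal ((deflationProd B w)ᵀ * deflationProd B w).trace
            ∂(Measure.pi fun _ : Fin s => ν) := by
          refine lintegral_mono fun w => ?_
          simpa only [deflationProd_cons] using lintegral_trace_deflation_mul_le hB hlam _
      _ ≤ ENNReal.ofReal (1 - lam / B) * (Fintype.card n * ENNReal.ofReal (1 - lam / B) ^ s) := by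
          rw [lintegral_const_mul _ (measurable_trace_deflationProd B).ennreal_ofReal]
          gcongr
      _ = _ := by ring

theorem measure_pi_span_ne_top_le (hB : ∀ᵐ x ∂ν, x ⬝ᵥ x ≤ B)
    (hlam : ∀ q, lam * (q ⬝ᵥ q) ≤ ∫ x, (x ⬝ᵥ q) ^ 2 ∂ν) (s : ℕ) :
    Measure.pi (fun _ : Fin s => ν) {v | Submodule.span ℝ (Set.range v) ≠ ⊤} ≤
      ENNReal.ofReal (Fintype.card n * Real.exp (-(lam * s) / B)) := by
  have hsub : {v : Fin s → n → ℝ | Submodule.span ℝ (Set.range v) ≠ ⊤} ⊆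
      {v | 1 ≤ ENNReal.ofReal ((deflationProd B v)ᵀ * deflationProd B v).trace} := by
    intro v hv
    obtain ⟨u, hu, hvu⟩ := exists_ne_zero_forall_dotProduct_eq_zero hv
    exact ENNReal.one_le_ofReal.mpr <| one_le_trace_transpose_mul_self hu <|
      deflationProd_mulVec_of_forall_dotProduct_eq_zero B fun k => hvu _ ⟨k, rfl⟩
  calc _ ≤ _ := measure_mono hsub
    _ ≤ ∫⁻ v, ENNReal.ofReal ((deflationProd B v)ᵀ * deflationProd B v).trace
          ∂(Measure.pi fun _ : Fin s => ν) := by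
        simpa using mul_meas_ge_le_lintegral₀
          (measurable_trace_deflationProd B).ennreal_ofReal.aemeasurable 1
    _ ≤ Fintype.card n * ENNReal.ofReal (1 - lam / B) ^ s :=
        lintegral_trace_deflationProd_le hB hlam s
    _ ≤ Fintype.card n * ENNReal.ofReal (Real.exp (-(lam / B))) ^ s := by
        gcongr
        linarith [Real.add_one_le_exp (-(lam / B))]
    _ = _ := by
        rw [ENNReal.ofReal_mul (Nat.cast_nonneg _), ENNReal.ofReal_natCast,
          ← ENNReal.ofReal_pow (Real.exp_nonneg _), ← Real.exp_nat_mul]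
        ring_nf

end Span

theorem matrix_chernoff_span_consequence {d s : ℕ} {Ω : Type*} [MeasurableSpace Ω]
    (μ : Measure Ω) [IsProbabilityMeasure μ]
    (X : Fin s → Ω → (Fin d → ℝ)) (hmeas : ∀ k, Measurable (X k))
    (hindep : iIndepFun X μ)
    (ν : Measure (Fin d → ℝ)) (hid : ∀ k, Measure.map (X k) μ = ν)
    (Sig : Matrix (Fin d) (Fin d) ℝ)
    (hSig : Sig = Matrix.of fun i j => ∫ v, v i * v j ∂ν)
    (hHerm : Sig.IsHermitian)
    (lam B : ℝ) (hlam : lam = ⨅ k, hHerm.eigenvalues k) (hlampos : 0 < lam)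
    (hB : ∀ᵐ v ∂ν, ∑ i, (v i) ^ 2 ≤ B) :
    (μ {ω | Submodule.span ℝ (Set.range fun k => X k ω) ≠ ⊤}).toReal ≤
      d * Real.exp (-(lam * s) / (2 * B)) := by
  obtain rfl | hs := Nat.eq_zero_or_pos s
  · -- for `d = 0` the infimum over `Fin 0` is the junk value `0`, contradicting `0 < lam`
    obtain rfl | hd := Nat.eq_zero_or_pos d
    · simp [Real.iInf_of_isEmpty] at hlam
      linarith
    exact measureReal_le_one.trans (by simp; omega)
  have : IsProbabilityMeasure ν :=
    hid ⟨0, hs⟩ ▸ Measure.isProbabilityMeasure_map (hmeas _).aemeasurable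
  have hB' : ∀ᵐ x ∂ν, x ⬝ᵥ x ≤ B := by simpa [dotProduct, sq] using hB
  have hlam' : ∀ q, lam * (q ⬝ᵥ q) ≤ ∫ x, (x ⬝ᵥ q) ^ 2 ∂ν := fun q => by
    rw [integral_dotProduct_sq (integrable_apply_mul_apply hB'), ← hSig]
    exact le_dotProduct_mulVec_of_le_eigenvalues hHerm
      (fun i => hlam ▸ ciInf_le (Finite.bddBelow_range _) i) q
  have hlaw : μ.map (fun ω k => X k ω) = Measure.pi fun _ => ν := by
    simp_rw [hindep.map_fun_eq_pi_map fun k => (hmeas k).aemeasurable, hid]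
  have hprob := (Measure.le_map_apply (measurable_pi_lambda _ hmeas).aemeasurable _).trans
    (hlaw ▸ measure_pi_span_ne_top_le hB' hlam' s)
  have hexp : -(lam * s) / B ≤ -(lam * s) / (2 * B) := by
    rw [neg_div, neg_div, neg_le_neg_iff, mul_comm 2 B, ← div_div]
    exact half_le_self (div_nonneg (by positivity) (nonneg_of_ae_dotProduct_self_le hB'))
  refine ENNReal.toReal_le_of_le_ofReal (by positivity) (hprob.trans (ENNReal.ofReal_le_ofReal ?_))
  simpa using mul_le_mul_of_nonneg_left (Real.exp_le_exp.mpr hexp) (Nat.cast_nonneg d)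
end

section
/- For a random vector z ∈ ℝ^R with entries in {±1} (so ‖z‖² = R) and E[zz^T] = I, if z_1,...,z_n are i.i.d. copies of z, then P(span{z_1,...,z_n} ≠ ℝ^R) ≤ R·exp(-n/(2R)). -/
/-!
If `V` is a subspace of dimension `d` with orthonormal basis `b`, isotropy of `z` gives
`𝔼 ∑ ⟪b i, z⟫² = d`, while this sum equals `‖z‖² = R` whenever `z ∈ V`; hence `P(z ∈ V) ≤ d / R`.
Conditioning on the first vector, the probability that `V ⊔ span {z₁, …, zₙ}` is proper is at
most `(R - d) (1 - 1/R)ⁿ` by induction on `n`: `V ⊔ span {z₁}` has dimension `d` with probability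
at most `d / R` and dimension at least `d + 1` otherwise, and
`(R - d - 1) + d / R = (R - d) (1 - 1/R)`. Take `V = ⊥` and use `(1 - 1/R)ⁿ ≤ exp (-n / R)`.
-/

open MeasureTheory ProbabilityTheory Matrix

open Module Set Submodule RealInnerProductSpace

section SpanningFamilies

variable {𝕜 E : Type*} [NontriviallyNormedField 𝕜] [CompleteSpace 𝕜] [NormedAddCommGroup E]
  [NormedSpace 𝕜 E] [FiniteDimensional 𝕜 E]

theorem isOpen_setOf_span_range_eq_top {ι : Type*} [Finite ι] :
    IsOpen {g : ι → E | span 𝕜 (range g) = ⊤} := by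
  classical
  have := Fintype.ofFinite ι
  let Φ := (ContinuousLinearEquiv.piRing (𝕜 := 𝕜) (E := E) ι).symm
  have hrange (g : ι → E) : LinearMap.range (Φ g : (ι → 𝕜) →ₗ[𝕜] E) = span 𝕜 (range g) := by
    rw [← Fintype.range_linearCombination]
    congr 1
    ext c
    exact (LinearEquiv.piRing_symm_apply (S := 𝕜) g _).trans (by simp [Pi.single_apply])
  have hset : {g : ι → E | span 𝕜 (range g) = ⊤} =
      Φ ⁻¹' {φ | ↑(finrank 𝕜 E) ≤ (φ : (ι → 𝕜) →ₗ[𝕜] E).rank} := by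
    ext g
    simp only [mem_ofPred_eq, mem_preimage, LinearMap.rank, ← hrange g, ← finrank_eq_rank,
      Nat.cast_le]
    exact ⟨fun h => by rw [h, finrank_top],
      fun h => eq_top_of_finrank_eq (le_antisymm (finrank_le _) h)⟩
  rw [hset]
  exact (isOpen_setOfPred_nat_le_rank _).preimage Φ.continuous

theorem isClosed_setOf_sup_span_range_ne_top (V : Submodule 𝕜 E) (ι : Type*) [Finite ι] :
    IsClosed {f : ι → E | V ⊔ span 𝕜 (range f) ≠ ⊤} := by
  obtain ⟨S, hSfin, rfl⟩ := fg_def.1 (IsNoetherian.noetherian V)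
  have := hSfin.to_subtype
  have hset : {f : ι → E | span 𝕜 S ⊔ span 𝕜 (range f) ≠ ⊤} =
      (fun f => Sum.elim ((↑) : S → E) f) ⁻¹' {g | span 𝕜 (range g) = ⊤}ᶜ := by
    ext f
    simp [Set.Sum.elim_range, span_union]
  rw [hset]
  exact isOpen_setOf_span_range_eq_top.isClosed_compl.preimage
    (continuous_pi fun i => i.casesOn (fun _ => continuous_const) continuous_apply)

end SpanningFamilies

theorem MeasureTheory.Measure.pi_fin_succ_apply_eq_lintegral_cons {α : Type*}
    [MeasurableSpace α] (ν : Measure α) [SigmaFinite ν] {n : ℕ} {S : Set (Fin (n + 1) → α)}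
    (hS : MeasurableSet S) :
    Measure.pi (fun _ => ν) S = ∫⁻ a, Measure.pi (fun _ => ν) {f | Fin.cons a f ∈ S} ∂ν := by
  have e := measurePreserving_piFinSuccAbove (fun _ : Fin (n + 1) => ν) 0
  rw [← e.symm.measure_preimage_equiv, Measure.prod_apply (hS.preimage (by fun_prop))]
  simp only [MeasurableEquiv.piFinSuccAbove_symm_apply, Fin.insertNthEquiv, Fin.insertNth_zero']
  rfl

theorem measure_pi_succ_sup_span_range_ne_top {E : Type*} [NormedAddCommGroup E]
    [NormedSpace ℝ E] [FiniteDimensional ℝ E] [MeasurableSpace E] [OpensMeasurableSpace E]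
    (ν : Measure E) [SigmaFinite ν] (V : Submodule ℝ E) (n : ℕ) :
    Measure.pi (fun _ : Fin (n + 1) => ν) {f | V ⊔ span ℝ (range f) ≠ ⊤} =
      ∫⁻ v, Measure.pi (fun _ : Fin n => ν) {f | V ⊔ span ℝ {v} ⊔ span ℝ (range f) ≠ ⊤} ∂ν := by
  rw [Measure.pi_fin_succ_apply_eq_lintegral_cons ν
    (isClosed_setOf_sup_span_range_ne_top V _).measurableSet]
  simp [Fin.range_cons, span_insert, sup_assoc]

theorem measure_pi_sup_span_range_ne_top_le {E : Type*} [NormedAddCommGroup E]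
    [NormedSpace ℝ E] [FiniteDimensional ℝ E] [MeasurableSpace E] [OpensMeasurableSpace E]
    (ν : Measure E) [IsProbabilityMeasure ν]
    (hν : ∀ V : Submodule ℝ E, V ≠ ⊤ → ν V ≤ ENNReal.ofReal (finrank ℝ V / finrank ℝ E))
    (n : ℕ) (V : Submodule ℝ E) :
    Measure.pi (fun _ : Fin n => ν) {f | V ⊔ span ℝ (range f) ≠ ⊤} ≤
      ENNReal.ofReal ((finrank ℝ E - finrank ℝ V) * (1 - 1 / finrank ℝ E) ^ n) := by
  set R : ℝ := (finrank ℝ E : ℝ) with hR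
  induction n generalizing V with
  | zero =>
    obtain rfl | hV := eq_or_ne V ⊤
    · simp
    have hdR : (finrank ℝ V : ℝ) + 1 ≤ R := by rw [hR]; exact_mod_cast finrank_lt hV
    simp only [range_eq_empty, span_empty, sup_bot_eq, ne_eq, hV, not_false_eq_true,
      ofPred_true, measure_univ, pow_zero, mul_one, ENNReal.one_le_ofReal]
    linarith
  | succ n ih =>
    obtain rfl | hV := eq_or_ne V ⊤
    · simp
    set d : ℝ := (finrank ℝ V : ℝ) with hd
    set c : ℝ := 1 - 1 / R with hc_def
    have hdR : d + 1 ≤ R := by rw [hR, hd]; exact_mod_cast finrank_lt hV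
    have hR0 : 0 < R := by linarith [show 0 ≤ d from Nat.cast_nonneg _]
    have hc : 0 ≤ c := by
      rw [sub_nonneg, div_le_one hR0]
      linarith
    have hcn := pow_nonneg hc n
    have hstep : (R - d) * c = R - d - 1 + d / R := by
      rw [hc_def]
      field_simp
      ring
    clear_value c
    have hslice (v : E) :
        Measure.pi (fun _ : Fin n => ν) {f | V ⊔ span ℝ {v} ⊔ span ℝ (range f) ≠ ⊤} ≤
          ENNReal.ofReal (c ^ n * (R - d - 1)) +
            (V : Set E).indicator (fun _ => ENNReal.ofReal (c ^ n)) v := by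
      refine (ih _).trans ?_
      by_cases hv : v ∈ V
      · rw [sup_eq_left.2 ((span_singleton_le_iff_mem _ _).2 hv), indicator_of_mem hv,
          ← ENNReal.ofReal_add (by nlinarith) hcn]
        exact ENNReal.ofReal_le_ofReal (le_of_eq (by ring))
      · have hlt : V < V ⊔ span ℝ {v} :=
          left_lt_sup.2 fun h => hv ((span_singleton_le_iff_mem _ _).1 h)
        have hd' : d + 1 ≤ finrank ℝ ↥(V ⊔ span ℝ {v}) := by
          rw [hd]; exact_mod_cast finrank_lt_finrank_of_lt hlt
        rw [indicator_of_notMem hv, add_zero]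
        exact ENNReal.ofReal_le_ofReal (by nlinarith)
    calc Measure.pi (fun _ : Fin (n + 1) => ν) {f | V ⊔ span ℝ (range f) ≠ ⊤}
        = ∫⁻ v, Measure.pi (fun _ : Fin n => ν)
            {f | V ⊔ span ℝ {v} ⊔ span ℝ (range f) ≠ ⊤} ∂ν :=
          measure_pi_succ_sup_span_range_ne_top ν V n
      _ ≤ ∫⁻ v, ENNReal.ofReal (c ^ n * (R - d - 1)) +
            (V : Set E).indicator (fun _ => ENNReal.ofReal (c ^ n)) v ∂ν := lintegral_mono hslice
      _ = ENNReal.ofReal (c ^ n * (R - d - 1)) + ENNReal.ofReal (c ^ n) * ν V := by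
          rw [lintegral_add_left measurable_const, lintegral_const, measure_univ, mul_one,
            lintegral_indicator_const V.closed_of_finiteDimensional.measurableSet]
      _ ≤ ENNReal.ofReal (c ^ n * (R - d - 1)) +
            ENNReal.ofReal (c ^ n) * ENNReal.ofReal (d / R) := by
          gcongr
          exact hν V hV
      _ = ENNReal.ofReal ((R - d) * c ^ (n + 1)) := by
          rw [← ENNReal.ofReal_mul hcn, ← ENNReal.ofReal_add (by nlinarith) (by positivity)]
          congr 1
          linear_combination -c ^ n * hstep

theorem mul_measureReal_preimage_le_finrank {E : Type*} [NormedAddCommGroup E]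
    [InnerProductSpace ℝ E] [MeasurableSpace E] [OpensMeasurableSpace E]
    {Ω : Type*} [MeasurableSpace Ω] (P : Measure Ω) [IsFiniteMeasure P] {X : Ω → E}
    (hX : Measurable X) {K : ℝ} (hK : ∀ᵐ ω ∂P, K ≤ ‖X ω‖ ^ 2)
    (hiso : ∀ u, ∫ ω, ⟪u, X ω⟫ ^ 2 ∂P = ‖u‖ ^ 2) (V : Submodule ℝ E) [FiniteDimensional ℝ V] :
    K * P.real (X ⁻¹' V) ≤ finrank ℝ V := by
  set b := stdOrthonormalBasis ℝ V
  have hb (i) : ‖(b i : E)‖ = 1 := b.norm_eq_one i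
  have hint (i) : Integrable (fun ω => ⟪(b i : E), X ω⟫ ^ 2) P :=
    Integrable.of_integral_ne_zero (by simp [hiso, hb])
  have hVm : MeasurableSet (X ⁻¹' V) := hX V.closed_of_finiteDimensional.measurableSet
  have hle : (X ⁻¹' V).indicator (fun _ => K) ≤ᵐ[P] fun ω => ∑ i, ⟪(b i : E), X ω⟫ ^ 2 := by
    filter_upwards [hK] with ω hω
    by_cases hV : X ω ∈ V
    · have hparseval := b.sum_sq_inner_right ⟨X ω, hV⟩
      simp only [Submodule.coe_inner, Submodule.coe_norm] at hparseval
      rwa [Set.indicator_of_mem (show ω ∈ X ⁻¹' V from hV), hparseval]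
    · rw [Set.indicator_of_notMem (show ω ∉ X ⁻¹' V from hV)]
      positivity
  calc K * P.real (X ⁻¹' V) = ∫ ω, (X ⁻¹' V).indicator (fun _ => K) ω ∂P := by
        rw [integral_indicator_const _ hVm, smul_eq_mul, mul_comm]
    _ ≤ ∫ ω, ∑ i, ⟪(b i : E), X ω⟫ ^ 2 ∂P :=
        integral_mono_ae ((integrable_const K).indicator hVm)
          (integrable_finsetSum _ fun i _ => hint i) hle
    _ = finrank ℝ V := by simp [integral_finsetSum _ fun i _ => hint i, hiso, hb]

theorem integral_inner_toLp_sq {R : ℕ} (ν : Measure (Fin R → ℝ))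
    (hmom : ∀ i j, ∫ v, v i * v j ∂ν = (1 : Matrix (Fin R) (Fin R) ℝ) i j)
    (u : EuclideanSpace ℝ (Fin R)) :
    ∫ v, ⟪u, WithLp.toLp 2 v⟫ ^ 2 ∂ν = ‖u‖ ^ 2 := by
  have hL2 (i : Fin R) : MemLp (fun v : Fin R → ℝ => v i) 2 ν :=
    (memLp_two_iff_integrable_sq (measurable_pi_apply i).aestronglyMeasurable).2
      (Integrable.of_integral_ne_zero (by simp [sq, hmom]))
  have hint (i j : Fin R) : Integrable (fun v : Fin R → ℝ => v i * v j) ν :=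
    (hL2 i).integrable_mul (hL2 j)
  have hexpand (v : Fin R → ℝ) : ⟪u, WithLp.toLp 2 v⟫ ^ 2 = ∑ i, ∑ j, u i * u j * (v i * v j) := by
    simp only [PiLp.inner_apply, sq, Finset.sum_mul_sum, RCLike.inner_apply, conj_trivial]
    exact Finset.sum_congr rfl fun i _ => Finset.sum_congr rfl fun j _ => by ring
  simp_rw [hexpand, EuclideanSpace.real_norm_sq_eq]
  rw [integral_finsetSum _ fun i _ => integrable_finsetSum _ fun j _ => (hint i j).const_mul _]
  simp [integral_finsetSum _ fun j _ => (hint _ j).const_mul _, integral_const_mul, hmom,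
    Matrix.one_apply, sq]

theorem measure_le_finrank_div_of_sign {R : ℕ} (ν : Measure (Fin R → ℝ)) [IsFiniteMeasure ν]
    (hsign : ∀ᵐ v ∂ν, ∀ i, v i = 1 ∨ v i = -1)
    (hmom : ∀ i j, ∫ v, v i * v j ∂ν = (1 : Matrix (Fin R) (Fin R) ℝ) i j)
    (V : Submodule ℝ (Fin R → ℝ)) (hV : V ≠ ⊤) :
    ν V ≤ ENNReal.ofReal (finrank ℝ V / R) := by
  have hR : (0 : ℝ) < R := by
    rcases R.eq_zero_or_pos with rfl | hR
    · exact absurd (Subsingleton.elim _ _) hV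
    · exact_mod_cast hR
  have hnorm : ∀ᵐ v ∂ν, (R : ℝ) ≤ ‖WithLp.toLp 2 v‖ ^ 2 := by
    filter_upwards [hsign] with v hv
    have hsq (i) : v i ^ 2 = 1 := by rcases hv i with h | h <;> simp [h]
    simp [EuclideanSpace.real_norm_sq_eq, hsq]
  let W : Submodule ℝ (EuclideanSpace ℝ (Fin R)) :=
    V.map (WithLp.linearEquiv 2 ℝ (Fin R → ℝ)).symm.toLinearMap
  have hW : WithLp.toLp 2 ⁻¹' (W : Set (EuclideanSpace ℝ (Fin R))) = V := by
    ext v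
    simp [W]
  have key := mul_measureReal_preimage_le_finrank ν (PiLp.continuous_toLp 2 _).measurable hnorm
    (integral_inner_toLp_sq ν hmom) W
  rw [hW, LinearEquiv.finrank_map_eq] at key
  rw [ENNReal.le_ofReal_iff_toReal_le (measure_ne_top ν _) (by positivity), ← measureReal_def,
    le_div_iff₀ hR, mul_comm]
  exact key

theorem one_sub_one_div_pow_le_exp (R n : ℕ) :
    (1 - 1 / (R : ℝ)) ^ n ≤ Real.exp (-(n : ℝ) / (2 * R)) := by
  rcases R.eq_zero_or_pos with rfl | hR
  · simp
  have hR : (1 : ℝ) ≤ R := by exact_mod_cast hR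
  calc (1 - 1 / (R : ℝ)) ^ n ≤ Real.exp (-(1 / R)) ^ n := by
        gcongr
        · rw [sub_nonneg, div_le_one (by positivity)]
          exact hR
        · linarith [Real.add_one_le_exp (-(1 / R))]
    _ = Real.exp (-n / R) := by rw [← Real.exp_nat_mul]; ring_nf
    _ ≤ Real.exp (-(n : ℝ) / (2 * R)) := by
        rw [Real.exp_le_exp, neg_div, neg_div, neg_le_neg_iff]
        gcongr
        linarith

theorem chernoff_span_sign_vectors {R n : ℕ} {Ω : Type*} [MeasurableSpace Ω]
    (μ : Measure Ω) [IsProbabilityMeasure μ]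
    (Z : Fin n → Ω → (Fin R → ℝ)) (hmeas : ∀ k, Measurable (Z k))
    (hindep : iIndepFun Z μ)
    (ν : Measure (Fin R → ℝ)) (hid : ∀ k, Measure.map (Z k) μ = ν)
    (hsign : ∀ᵐ v ∂ν, ∀ i, v i = 1 ∨ v i = -1)
    (hmom : ∀ i j, ∫ v, v i * v j ∂ν = (1 : Matrix (Fin R) (Fin R) ℝ) i j) :
    (μ {ω | Submodule.span ℝ (Set.range fun k => Z k ω) ≠ ⊤}).toReal ≤
      R * Real.exp (-(n : ℝ) / (2 * R)) := by
  rcases R.eq_zero_or_pos with rfl | hR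
  · simp [Subsingleton.elim _ (⊤ : Submodule ℝ (Fin 0 → ℝ))]
  rcases n.eq_zero_or_pos with rfl | hn
  · simp only [CharP.cast_eq_zero, neg_zero, zero_div, Real.exp_zero, mul_one]
    exact measureReal_le_one.trans (Nat.one_le_cast.2 hR)
  have : IsProbabilityMeasure ν :=
    hid ⟨0, hn⟩ ▸ Measure.isProbabilityMeasure_map (hmeas _).aemeasurable
  have hlaw : μ.map (fun ω k => Z k ω) = Measure.pi fun _ => ν := by
    rw [(iIndepFun_iff_map_fun_eq_pi_map fun k => (hmeas k).aemeasurable).1 hindep]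
    simp [hid]
  have hbound := measure_pi_sup_span_range_ne_top_le ν
    (by simpa using measure_le_finrank_div_of_sign ν hsign hmom) n ⊥
  rw [← hlaw, Measure.map_apply (measurable_pi_lambda _ hmeas)
    (isClosed_setOf_sup_span_range_ne_top _ _).measurableSet] at hbound
  simp only [Set.preimage_ofPred_eq, bot_sup_eq, finrank_bot, finrank_fin_fun, CharP.cast_eq_zero,
    sub_zero] at hbound
  refine ENNReal.toReal_le_of_le_ofReal (by positivity) (hbound.trans (ENNReal.ofReal_le_ofReal ?_))
  exact mul_le_mul_of_nonneg_left (one_sub_one_div_pow_le_exp R n) (Nat.cast_nonneg R)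
end

section
/- If A and B are positive semidefinite linear operators on ℝ^r, then the induced operator A ∨ B on the symmetric tensor space ℝ^r ∨ ℝ^r (defined on elementary symmetric tensors by (A ∨ B)(u ∨ v) = (Au) ∨ (Bv), symmetrized) is positive semidefinite. -/
/-!
For the trace inner product the adjoint of `S ↦ M * S * N` is `S ↦ Mᵀ * S * Nᵀ`, so `A ∨ B` is
self-adjoint as soon as `A` and `B` are symmetric. Its quadratic form is
`(tr (Sᵀ A S B) + tr (Sᵀ B S A)) / 2`, and `tr (Sᵀ C S D) = tr ((Sᵀ C S) D)` is the trace of a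
product of two positive semidefinite matrices. Such a trace is nonnegative: writing `D = bᴴ b`
turns it into the trace of the positive semidefinite matrix `b (Sᵀ C S) bᴴ`.
-/

open Matrix

namespace Matrix

open scoped ComplexOrder

variable {n : Type*} [Fintype n]

theorem trace_transpose_mul_mul_mul {R : Type*} [CommRing R] (S T M N : Matrix n n R) :
    (Sᵀ * (M * T * N)).trace = ((Mᵀ * S * Nᵀ)ᵀ * T).trace := by
  simp only [transpose_mul, transpose_transpose, Matrix.mul_assoc]
  rw [trace_mul_comm N, Matrix.mul_assoc, Matrix.mul_assoc]

open scoped MatrixOrder in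
theorem PosSemidef.trace_mul_nonneg {𝕜 : Type*} [RCLike 𝕜] {X D : Matrix n n 𝕜}
    (hX : X.PosSemidef) (hD : D.PosSemidef) : 0 ≤ (X * D).trace := by
  classical
  obtain ⟨b, rfl⟩ := CStarAlgebra.nonneg_iff_eq_star_mul_self.mp hD.nonneg
  rw [star_eq_conjTranspose, ← Matrix.mul_assoc, trace_mul_comm]
  simpa only [Matrix.mul_assoc] using (hX.mul_mul_conjTranspose_same b).trace_nonneg

theorem PosSemidef.trace_conjTranspose_mul_mul_mul_nonneg {𝕜 : Type*} [RCLike 𝕜]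
    {C D : Matrix n n 𝕜} (hC : C.PosSemidef) (hD : D.PosSemidef) (S : Matrix n n 𝕜) :
    0 ≤ (Sᴴ * (C * S * D)).trace := by
  simpa only [Matrix.mul_assoc] using (hC.conjTranspose_mul_mul_same S).trace_mul_nonneg hD

end Matrix

/-- `ℝ^r ∨ ℝ^r` is modelled by the symmetric matrices with inner product `tr (Sᵀ T)`, on which
`A ∨ B` acts by `S ↦ (A S Bᵀ + B S Aᵀ) / 2`. -/
theorem symTensor_op_posSemidef {r : ℕ} (A B : Matrix (Fin r) (Fin r) ℝ)
    (hA : A.PosSemidef) (hB : B.PosSemidef) :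
    (∀ S T : Matrix (Fin r) (Fin r) ℝ, S.IsSymm → T.IsSymm →
      (Sᵀ * (((1:ℝ)/2) • (A * T * Bᵀ + B * T * Aᵀ))).trace =
      ((((1:ℝ)/2) • (A * S * Bᵀ + B * S * Aᵀ))ᵀ * T).trace) ∧
    (∀ S : Matrix (Fin r) (Fin r) ℝ, S.IsSymm →
      0 ≤ (Sᵀ * (((1:ℝ)/2) • (A * S * Bᵀ + B * S * Aᵀ))).trace) := by
  have hAt : Aᵀ = A := by simpa [conjTranspose_eq_transpose_of_trivial] using hA.isHermitian.eq
  have hBt : Bᵀ = B := by simpa [conjTranspose_eq_transpose_of_trivial] using hB.isHermitian.eq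
  refine ⟨fun S T _ _ ↦ ?_, fun S _ ↦ ?_⟩
  · simp only [Matrix.mul_smul, transpose_smul, Matrix.smul_mul, trace_smul, mul_add,
      transpose_add, add_mul, trace_add, trace_transpose_mul_mul_mul, hAt, hBt]
  · have quadratic_nonneg {C D : Matrix (Fin r) (Fin r) ℝ} (hC : C.PosSemidef)
        (hD : D.PosSemidef) : 0 ≤ (Sᵀ * (C * S * D)).trace := by
      simpa only [conjTranspose_eq_transpose_of_trivial] using
        hC.trace_conjTranspose_mul_mul_mul_nonneg hD S
    rw [Matrix.mul_smul, trace_smul, mul_add, trace_add]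
    exact smul_nonneg (by norm_num)
      (add_nonneg (quadratic_nonneg hA hB.transpose) (quadratic_nonneg hB hA.transpose))
end
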